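/- arXiv:1304.7329 — 4 statements merged into one kernel-verified Lean document; each statement's English description precedes it below -/
import Mathlib

section
/- For the planar polynomial vector fields A_k^l := ((k-l+1)/(k+2)) x^{l+1} y^{k-l} ∂/∂x − ((l+1)/(k+2)) x^l y^{k-l+1} ∂/∂y and B_m^n := x^{n+1} y^{m-n} ∂/∂x + x^n y^{m-n+1} ∂/∂y, the Lie bracket satisfies [A_k^l, B_m^n] = (m(m+2)/(m+k+2))(n/m − (l+1)/(k+2)) B_{k+m}^{n+l} − k A_{k+m}^{n+l}. -/
noncomputable section
namespace BT

open MvPolynomial Finset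

/-- Polynomials in two variables x, y over ℝ. -/
abbrev P2 : Type := MvPolynomial (Fin 2) ℝ

/-- The coordinate x. -/
def px : P2 := MvPolynomial.X 0
/-- The coordinate y. -/
def py : P2 := MvPolynomial.X 1

/-- Partial derivative in x. -/
def dx (p : P2) : P2 := pderiv 0 p
/-- Partial derivative in y. -/
def dy (p : P2) : P2 := pderiv 1 p

/-- A planar polynomial vector field, given by its two components. -/
abbrev VF : Type := P2 × P2

/-- Lie bracket of vector fields (commutator of derivations). -/
def lie (v w : VF) : VF :=
  (v.1 * dx w.1 + v.2 * dy w.1 - w.1 * dx v.1 - w.2 * dy v.1,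
   v.1 * dx w.2 + v.2 * dy w.2 - w.1 * dx v.2 - w.2 * dy v.2)

/-- Scalar multiple of a vector field. -/
def rsmul (c : ℝ) (v : VF) : VF := (C c * v.1, C c * v.2)

/-- Product of a polynomial function with a vector field (componentwise). -/
def psmul (p : P2) (v : VF) : VF := (p * v.1, p * v.2)

/-- The vector field A_k^l. -/
def A (k l : ℤ) : VF :=
  (C (((k : ℝ) - l + 1) / ((k : ℝ) + 2)) * px ^ (l + 1).toNat * py ^ (k - l).toNat,
   - (C (((l : ℝ) + 1) / ((k : ℝ) + 2)) * px ^ l.toNat * py ^ (k - l + 1).toNat))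

/-- The vector field B_k^l. -/
def B (k l : ℤ) : VF :=
  (px ^ (l + 1).toNat * py ^ (k - l).toNat,
   px ^ l.toNat * py ^ (k - l + 1).toNat)

/-- The monomial Z_k^l = x^l y^(k-l). -/
def Z (k l : ℤ) : P2 := px ^ l.toNat * py ^ (k - l).toNat

/-- The principal part 𝔹_s = A_0^1 + B_s^0. -/
def Bbs (s : ℤ) : VF := A 0 1 + B s 0

/-- The Pochhammer k-symbol (a)_k^n = a (a+k) (a+2k) ⋯ (a+(n-1)k). -/
def poch (a k : ℝ) (n : ℕ) : ℝ := ∏ j ∈ Finset.range n, (a + j * k)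

lemma dx_mono (a b : ℕ) : dx (px^a * py^b) = (a : P2) * px^(a-1) * py^b := by
  simp [dx, px, py, pderiv_mul, pderiv_pow, pderiv_X_of_ne (by decide : (1:Fin 2) ≠ 0)]
  ring
lemma dy_mono (a b : ℕ) : dy (px^a * py^b) = (b : P2) * px^a * py^(b-1) := by
  simp [dy, px, py, pderiv_mul, pderiv_pow, pderiv_X_of_ne (by decide : (0:Fin 2) ≠ 1)]
  ring
lemma dx_monoC (c : ℝ) (a b : ℕ) : dx (C c * px^a * py^b) = C c * ((a : P2) * px^(a-1) * py^b) := by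
  rw [mul_assoc, dx, pderiv_C_mul, ← dx, dx_mono]
lemma dy_monoC (c : ℝ) (a b : ℕ) : dy (C c * px^a * py^b) = C c * ((b : P2) * px^a * py^(b-1)) := by
  rw [mul_assoc, dy, pderiv_C_mul, ← dy, dy_mono]
lemma dx_neg (p : P2) : dx (-p) = - dx p := by simp [dx]
lemma dy_neg (p : P2) : dy (-p) = - dy p := by simp [dy]
lemma pow_pred (v : P2) (e f g : ℕ) (h : e + f = g + 1) :
    (e : P2) * v^(e-1) * v^f = (e : P2) * v^g := by
  cases e with
  | zero => simp
  | succ e' => rw [show e'+1-1 = e' from rfl, mul_assoc, ← pow_add, show e'+f = g by omega]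


set_option maxHeartbeats 2000000

/-- Structure constants:
[A_k^l, B_m^n] = (m(m+2)/(m+k+2))(n/m - (l+1)/(k+2)) B_{k+m}^{n+l} - k A_{k+m}^{n+l}. -/
theorem lie_A_B (k l m n : ℤ) (hk : 0 ≤ k) (hl1 : -1 ≤ l) (hl2 : l ≤ k + 1)
    (hm : 1 ≤ m) (hn1 : 0 ≤ n) (hn2 : n ≤ m) :
    lie (A k l) (B m n) =
      rsmul ((m : ℝ) * ((m : ℝ) + 2) / ((m : ℝ) + k + 2) *
          ((n : ℝ) / (m : ℝ) - ((l : ℝ) + 1) / ((k : ℝ) + 2))) (B (k + m) (n + l))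
        - rsmul (k : ℝ) (A (k + m) (n + l)) := by
  obtain ⟨K, rfl⟩ : ∃ K : ℕ, k = (K:ℤ) := ⟨k.toNat, by omega⟩
  obtain ⟨N, rfl⟩ : ∃ N : ℕ, n = (N:ℤ) := ⟨n.toNat, by omega⟩
  obtain ⟨q, rfl⟩ : ∃ q : ℕ, m = (N:ℤ) + q := ⟨(m - (N:ℤ)).toNat, by omega⟩
  have hmq : 1 ≤ N + q := by omega
  have h2 : ((N:ℝ)+(q:ℝ)) ≠ 0 := by
    have : (0:ℝ) < (N:ℝ)+(q:ℝ) := by exact_mod_cast hmq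
    linarith
  by_cases hl : l = -1
  · subst hl
    simp only [A, B, lie, rsmul]
    rw [show ((-1:ℤ)+1).toNat = 0 by omega, show ((K:ℤ) - -1).toNat = K+1 by omega,
      show (-1:ℤ).toNat = 0 by omega, show ((K:ℤ) - -1 + 1).toNat = K+2 by omega,
      show ((N:ℤ)+1).toNat = N+1 by omega, show ((N:ℤ)+(q:ℤ) - (N:ℤ)).toNat = q by omega,
      show ((N:ℤ)).toNat = N by omega, show ((N:ℤ)+(q:ℤ) - (N:ℤ) + 1).toNat = q+1 by omega,
      show ((N:ℤ) + -1 + 1).toNat = N by omega,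
      show ((K:ℤ)+((N:ℤ)+(q:ℤ)) - ((N:ℤ) + -1)).toNat = K+q+1 by omega,
      show ((N:ℤ) + -1).toNat = N-1 by omega,
      show ((K:ℤ)+((N:ℤ)+(q:ℤ)) - ((N:ℤ) + -1) + 1).toNat = K+q+2 by omega]
    push_cast
    simp only [dx_neg, dy_neg, dx_monoC, dy_monoC, dx_mono, dy_mono]
    rw [Prod.mk_sub_mk]
    simp only [Prod.mk.injEq, Nat.add_sub_cancel]
    have hz : (C (((-1:ℝ) + 1) / ((K:ℝ) + 2)) : P2) = 0 := by norm_num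
    constructor
    · have hreal1 : (((K:ℝ) - -1 + 1)/((K:ℝ)+2)) * ((N:ℝ)+1)
          - (((K:ℝ) - -1 + 1)/((K:ℝ)+2)) * ((K:ℝ)+1) =
          ((N:ℝ)+q)*((N:ℝ)+q+2)/((N:ℝ)+q+K+2) * ((N:ℝ)/((N:ℝ)+q) - (-1+1)/((K:ℝ)+2))
          - (K:ℝ) * (((K:ℝ) + ((N:ℝ)+q) - ((N:ℝ) + -1) + 1)/((K:ℝ) + ((N:ℝ)+q) + 2)) := by
        have d1 : ((K:ℝ)+2) ≠ 0 := by positivity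
        have d3 : ((N:ℝ)+(q:ℝ)+(K:ℝ)+2) ≠ 0 := by positivity
        have d4 : ((K:ℝ)+((N:ℝ)+(q:ℝ))+2) ≠ 0 := by positivity
        field_simp
        ring
      have s1 := congrArg (C : ℝ →+* P2) hreal1
      simp only [map_sub, map_add, map_mul, map_natCast, map_one, map_ofNat] at s1
      simp only [map_mul, map_sub, map_add, map_natCast]
      push_cast
      linear_combination (px^N * py^(K+q+1)) * s1
        - (py^(K+2) * ((q:P2) * px^(N+1) * py^(q-1))) * hz
    · have hreal2 : (((K:ℝ) - -1 + 1)/((K:ℝ)+2)) * (N:ℝ) =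
          ((N:ℝ)+q)*((N:ℝ)+q+2)/((N:ℝ)+q+K+2) * ((N:ℝ)/((N:ℝ)+q) - (-1+1)/((K:ℝ)+2))
          + (K:ℝ) * ((((N:ℝ) + -1) + 1)/((K:ℝ) + ((N:ℝ)+q) + 2)) := by
        have d1 : ((K:ℝ)+2) ≠ 0 := by positivity
        have d3 : ((N:ℝ)+(q:ℝ)+(K:ℝ)+2) ≠ 0 := by positivity
        have d4 : ((K:ℝ)+((N:ℝ)+(q:ℝ))+2) ≠ 0 := by positivity
        field_simp
        ring
      have s2 := congrArg (C : ℝ →+* P2) hreal2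
      simp only [map_sub, map_add, map_mul, map_natCast, map_one, map_ofNat] at s2
      simp only [map_mul, map_sub, map_add, map_natCast]
      push_cast
      linear_combination (px^(N-1) * py^(K+q+2)) * s2
        - (py^(K+2) * (((q:P2)+1) * px^N * py^q)) * hz
        + (px^N * py^(q+1) * (((K:P2)+2) * py^(K+1))) * hz
  · have hl0 : 0 ≤ l := by omega
    obtain ⟨L, rfl⟩ : ∃ L : ℕ, l = (L:ℤ) := ⟨l.toNat, by omega⟩
    by_cases hL : L ≤ K
    · obtain ⟨b, rfl⟩ : ∃ b : ℕ, K = L + b := ⟨K - L, by omega⟩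
      simp only [A, B, lie, rsmul]
      rw [show ((L:ℤ)+1).toNat = L+1 by omega, show (((L+b:ℕ):ℤ) - L).toNat = b by omega,
        show ((L:ℤ)).toNat = L by omega, show (((L+b:ℕ):ℤ) - L + 1).toNat = b+1 by omega,
        show ((N:ℤ)+1).toNat = N+1 by omega, show ((N:ℤ)+(q:ℤ) - (N:ℤ)).toNat = q by omega,
        show ((N:ℤ)).toNat = N by omega, show ((N:ℤ)+(q:ℤ) - (N:ℤ) + 1).toNat = q+1 by omega,
        show ((N:ℤ)+(L:ℤ)+1).toNat = N+L+1 by omega,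
        show (((L+b:ℕ):ℤ)+((N:ℤ)+(q:ℤ)) - ((N:ℤ)+(L:ℤ))).toNat = b+q by omega,
        show ((N:ℤ)+(L:ℤ)).toNat = N+L by omega,
        show (((L+b:ℕ):ℤ)+((N:ℤ)+(q:ℤ)) - ((N:ℤ)+(L:ℤ)) + 1).toNat = b+q+1 by omega]
      push_cast
      simp only [dx_neg, dy_neg, dx_monoC, dy_monoC, dx_mono, dy_mono]
      rw [Prod.mk_sub_mk]
      simp only [Prod.mk.injEq, Nat.add_sub_cancel]
      constructor
      · have hreal1 : (((L:ℝ)+b-L+1)/((L:ℝ)+b+2)) * ((N:ℝ)+1)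
            - (((L:ℝ)+1)/((L:ℝ)+b+2)) * (q:ℝ)
            - (((L:ℝ)+b-L+1)/((L:ℝ)+b+2)) * ((L:ℝ)+1)
            - (((L:ℝ)+b-L+1)/((L:ℝ)+b+2)) * (b:ℝ) =
            ((N:ℝ)+q)*((N:ℝ)+q+2)/((N:ℝ)+q+((L:ℝ)+b)+2) * ((N:ℝ)/((N:ℝ)+q) - ((L:ℝ)+1)/((L:ℝ)+b+2))
            - ((L:ℝ)+b) * (((L:ℝ)+b+((N:ℝ)+q)-((N:ℝ)+L)+1)/((L:ℝ)+b+((N:ℝ)+q)+2)) := by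
          have d1 : ((L:ℝ)+(b:ℝ)+2) ≠ 0 := by positivity
          have d3 : ((N:ℝ)+(q:ℝ)+((L:ℝ)+(b:ℝ))+2) ≠ 0 := by positivity
          have d4 : ((L:ℝ)+(b:ℝ)+((N:ℝ)+(q:ℝ))+2) ≠ 0 := by positivity
          field_simp
          ring
        have s1 := congrArg (C : ℝ →+* P2) hreal1
        simp only [map_sub, map_add, map_mul, map_natCast, map_one, map_ofNat] at s1
        have hq := pow_pred py q (b+1) (b+q) (by omega)
        have hb := pow_pred py b (q+1) (b+q) (by omega)
        simp only [map_mul, map_sub, map_add, map_natCast]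
        push_cast
        linear_combination (px^(N+L+1) * py^(b+q)) * s1
          - (C (((L:ℝ)+1)/((L:ℝ)+b+2)) * px^(N+L+1)) * hq
          - (C (((L:ℝ)+b-L+1)/((L:ℝ)+b+2)) * px^(N+L+1)) * hb
      · have hreal2 : (((L:ℝ)+b-L+1)/((L:ℝ)+b+2)) * (N:ℝ)
            - (((L:ℝ)+1)/((L:ℝ)+b+2)) * ((q:ℝ)+1)
            + (((L:ℝ)+1)/((L:ℝ)+b+2)) * (L:ℝ)
            + (((L:ℝ)+1)/((L:ℝ)+b+2)) * ((b:ℝ)+1) =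
            ((N:ℝ)+q)*((N:ℝ)+q+2)/((N:ℝ)+q+((L:ℝ)+b)+2) * ((N:ℝ)/((N:ℝ)+q) - ((L:ℝ)+1)/((L:ℝ)+b+2))
            + ((L:ℝ)+b) * (((N:ℝ)+L+1)/((L:ℝ)+b+((N:ℝ)+q)+2)) := by
          have d1 : ((L:ℝ)+(b:ℝ)+2) ≠ 0 := by positivity
          have d3 : ((N:ℝ)+(q:ℝ)+((L:ℝ)+(b:ℝ))+2) ≠ 0 := by positivity
          have d4 : ((L:ℝ)+(b:ℝ)+((N:ℝ)+(q:ℝ))+2) ≠ 0 := by positivity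
          field_simp
          ring
        have s2 := congrArg (C : ℝ →+* P2) hreal2
        simp only [map_sub, map_add, map_mul, map_natCast, map_one, map_ofNat] at s2
        have hN := pow_pred px N (L+1) (N+L) (by omega)
        have hL2 := pow_pred px L (N+1) (N+L) (by omega)
        simp only [map_mul, map_sub, map_add, map_natCast]
        push_cast
        linear_combination (px^(N+L) * py^(b+q+1)) * s2
          + (C (((L:ℝ)+b-L+1)/((L:ℝ)+b+2)) * py^(b+q+1)) * hN
          + (C (((L:ℝ)+1)/((L:ℝ)+b+2)) * py^(b+q+1)) * hL2
    · have hLK : L = K + 1 := by omega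
      subst hLK
      simp only [A, B, lie, rsmul]
      rw [show (((K+1:ℕ):ℤ)+1).toNat = K+2 by omega, show ((K:ℤ) - ((K+1:ℕ):ℤ)).toNat = 0 by omega,
        show (((K+1:ℕ):ℤ)).toNat = K+1 by omega, show ((K:ℤ) - ((K+1:ℕ):ℤ) + 1).toNat = 0 by omega,
        show ((N:ℤ)+1).toNat = N+1 by omega, show ((N:ℤ)+(q:ℤ) - (N:ℤ)).toNat = q by omega,
        show ((N:ℤ)).toNat = N by omega, show ((N:ℤ)+(q:ℤ) - (N:ℤ) + 1).toNat = q+1 by omega,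
        show ((N:ℤ)+((K+1:ℕ):ℤ)+1).toNat = N+K+2 by omega,
        show ((K:ℤ)+((N:ℤ)+(q:ℤ)) - ((N:ℤ)+((K+1:ℕ):ℤ))).toNat = q-1 by omega,
        show ((N:ℤ)+((K+1:ℕ):ℤ)).toNat = N+K+1 by omega,
        show ((K:ℤ)+((N:ℤ)+(q:ℤ)) - ((N:ℤ)+((K+1:ℕ):ℤ)) + 1).toNat = q by omega]
      push_cast
      simp only [dx_neg, dy_neg, dx_monoC, dy_monoC, dx_mono, dy_mono]
      rw [Prod.mk_sub_mk]
      simp only [Prod.mk.injEq, Nat.add_sub_cancel]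
      have hz3 : (C (((K:ℝ) - ((K:ℝ)+1) + 1) / ((K:ℝ) + 2)) : P2) = 0 := by
        rw [show ((K:ℝ) - ((K:ℝ)+1) + 1) = 0 by ring, zero_div, map_zero]
      constructor
      · have hreal1 : -((((K:ℝ)+1+1)/((K:ℝ)+2)) * (q:ℝ)) =
            ((N:ℝ)+q)*((N:ℝ)+q+2)/((N:ℝ)+q+K+2) * ((N:ℝ)/((N:ℝ)+q) - ((K:ℝ)+1+1)/((K:ℝ)+2))
            - (K:ℝ) * (((K:ℝ)+((N:ℝ)+q) - ((N:ℝ)+((K:ℝ)+1)) + 1)/((K:ℝ)+((N:ℝ)+q)+2)) := by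
          have d1 : ((K:ℝ)+2) ≠ 0 := by positivity
          have d3 : ((N:ℝ)+(q:ℝ)+(K:ℝ)+2) ≠ 0 := by positivity
          have d4 : ((K:ℝ)+((N:ℝ)+(q:ℝ))+2) ≠ 0 := by positivity
          field_simp
          ring
        have s1 := congrArg (C : ℝ →+* P2) hreal1
        simp only [map_sub, map_add, map_mul, map_natCast, map_one, map_ofNat, map_neg] at s1
        simp only [map_mul, map_sub, map_add, map_natCast]
        push_cast
        linear_combination (px^(N+K+2) * py^(q-1)) * s1
          + (px^(K+2) * (((N:P2)+1) * px^N * py^q)) * hz3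
          - (px^(N+1) * py^q * (((K:P2)+2) * px^(K+1))) * hz3
      · have hreal2 : -((((K:ℝ)+1+1)/((K:ℝ)+2)) * ((q:ℝ)+1))
            + (((K:ℝ)+1+1)/((K:ℝ)+2)) * ((K:ℝ)+1) =
            ((N:ℝ)+q)*((N:ℝ)+q+2)/((N:ℝ)+q+K+2) * ((N:ℝ)/((N:ℝ)+q) - ((K:ℝ)+1+1)/((K:ℝ)+2))
            + (K:ℝ) * (((N:ℝ)+((K:ℝ)+1)+1)/((K:ℝ)+((N:ℝ)+q)+2)) := by
          have d1 : ((K:ℝ)+2) ≠ 0 := by positivity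
          have d3 : ((N:ℝ)+(q:ℝ)+(K:ℝ)+2) ≠ 0 := by positivity
          have d4 : ((K:ℝ)+((N:ℝ)+(q:ℝ))+2) ≠ 0 := by positivity
          field_simp
          ring
        have s2 := congrArg (C : ℝ →+* P2) hreal2
        simp only [map_sub, map_add, map_mul, map_natCast, map_one, map_ofNat, map_neg] at s2
        simp only [map_mul, map_sub, map_add, map_natCast]
        push_cast
        linear_combination (px^(N+K+1) * py^q) * s2
          + (px^(K+2) * ((N:P2) * px^(N-1) * py^(q+1))) * hz3
end BT
end
end

section
/- For the monomial Z_m^n := x^n y^{m-n} and the vector field A_k^l, the product satisfies Z_m^n · A_k^l = A_{m+k}^{n+l} + (((k+2)n − m(l+1))/((k+2)(k+m+2))) B_{m+k}^{n+l}, where the product of a scalar function with a vector field is pointwise multiplication of the coefficient functions. -/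
noncomputable section
namespace BT

open MvPolynomial Finset

lemma mono1 (a b c : ℝ) (i j s t u v : ℕ) (hu : u = i + s) (hv : v = j + t) (h : a = b + c) :
    px ^ i * py ^ j * (C a * px ^ s * py ^ t) =
      C b * px ^ u * py ^ v + C c * (px ^ u * py ^ v) := by
  subst hu hv
  rw [h, map_add, pow_add, pow_add]; ring

lemma mono1z (a b c : ℝ) (i j s t u v : ℕ) (h0 : a = 0) (h : b + c = 0) :
    px ^ i * py ^ j * (C a * px ^ s * py ^ t) =
      C b * px ^ u * py ^ v + C c * (px ^ u * py ^ v) := by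
  subst h0
  have hbc : (C b : P2) + C c = 0 := by rw [← map_add, h, map_zero]
  simp only [map_zero, zero_mul, mul_zero]
  linear_combination (-(px ^ u * py ^ v)) * hbc

lemma mono2 (a b c : ℝ) (i j s t u v : ℕ) (hu : u = i + s) (hv : v = j + t) (h : a = b - c) :
    px ^ i * py ^ j * -(C a * px ^ s * py ^ t) =
      -(C b * px ^ u * py ^ v) + C c * (px ^ u * py ^ v) := by
  subst hu hv
  rw [h, map_sub, pow_add, pow_add]; ring

lemma mono2z (a b c : ℝ) (i j s t u v : ℕ) (h0 : a = 0) (h : b = c) :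
    px ^ i * py ^ j * -(C a * px ^ s * py ^ t) =
      -(C b * px ^ u * py ^ v) + C c * (px ^ u * py ^ v) := by
  subst h0 h
  simp only [map_zero, zero_mul, mul_zero, neg_zero]
  ring

/-- Module structure: Z_m^n · A_k^l = A_{m+k}^{n+l} + (((k+2)n - m(l+1))/((k+2)(k+m+2))) B_{m+k}^{n+l}. -/
theorem Z_smul_A (k l m n : ℤ) (hk : 0 ≤ k) (hl1 : -1 ≤ l) (hl2 : l ≤ k + 1)
    (hn1 : 0 ≤ n) (hn2 : n ≤ m) :
    psmul (Z m n) (A k l) =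
      A (m + k) (n + l) +
        rsmul ((((k : ℝ) + 2) * (n : ℝ) - (m : ℝ) * ((l : ℝ) + 1)) /
          (((k : ℝ) + 2) * ((k : ℝ) + m + 2))) (B (m + k) (n + l)) := by
  have hk0 : (0:ℝ) ≤ (k:ℝ) := by exact_mod_cast hk
  have hn0 : (0:ℝ) ≤ (n:ℝ) := by exact_mod_cast hn1
  have hm0 : (n:ℝ) ≤ (m:ℝ) := by exact_mod_cast hn2
  have hk2 : ((k:ℝ) + 2) ≠ 0 := by linarith
  have hmk2 : ((m:ℝ) + (k:ℝ) + 2) ≠ 0 := by linarith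
  have hkm2 : ((k:ℝ) + (m:ℝ) + 2) ≠ 0 := by linarith
  simp only [psmul, Z, A, B, rsmul, Prod.mk_add_mk, Prod.mk.injEq]
  constructor
  · rcases eq_or_lt_of_le hl2 with h | h
    · subst h
      apply mono1z
      · push_cast; ring_nf
      · push_cast; field_simp; ring
    · apply mono1
      · omega
      · omega
      · push_cast; field_simp; ring
  · rcases eq_or_lt_of_le hl1 with h | h
    · subst h
      apply mono2z
      · push_cast; ring_nf
      · push_cast; field_simp; ring
    · apply mono2
      · omega
      · omega
      · push_cast; field_simp; ring


end BT
end
end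

section
/- Let s ≥ 1, 𝔹_s := A_0^1 + B_s^0, and define ℬ_k^k := Σ_{l=0}^{k} [ (k−s)_s^l / (l! (s+1)^l) ] B_{k+ls}^{k-l}. Then [𝔹_s, ℬ_k^k] = [ (k−s)_s^{k+1} / (k! (s+1)^k) ] B_{k(s+1)+s}^0. In particular, for k = s this bracket vanishes, so ℬ_s^s commutes with 𝔹_s. -/
noncomputable section
namespace BT

open MvPolynomial Finset

/-- The symmetry field ℬ_k^k = Σ_{l=0}^{k} ((k-s)_s^l / (l!(s+1)^l)) B_{k+ls}^{k-l}. -/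
def calB (s k : ℕ) : VF :=
  ∑ l ∈ Finset.range (k + 1),
    rsmul (poch ((k : ℝ) - s) (s : ℝ) l / ((Nat.factorial l : ℝ) * ((s : ℝ) + 1) ^ l))
      (B ((k : ℤ) + l * s) ((k : ℤ) - l))

-- basic derivative lemmas
@[simp] lemma dx_px : dx px = 1 := by simp [dx, px]
@[simp] lemma dx_py : dx py = 0 := by simp [dx, py, pderiv_X]
@[simp] lemma dy_px : dy px = 0 := by simp [dy, px, pderiv_X]
@[simp] lemma dy_py : dy py = 1 := by simp [dy, py]
@[simp] lemma dx_mul (p q : P2) : dx (p*q) = dx p * q + p * dx q := by simp [dx, pderiv_mul]; ring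
@[simp] lemma dy_mul (p q : P2) : dy (p*q) = dy p * q + p * dy q := by simp [dy, pderiv_mul]; ring
@[simp] lemma dx_pow (p : P2) (n : ℕ) : dx (p^n) = n * p^(n-1) * dx p := by simp [dx, pderiv_pow]; ring
@[simp] lemma dy_pow (p : P2) (n : ℕ) : dy (p^n) = n * p^(n-1) * dy p := by simp [dy, pderiv_pow]; ring
@[simp] lemma dx_C (c : ℝ) : dx (C c) = 0 := by simp [dx]
@[simp] lemma dy_C (c : ℝ) : dy (C c) = 0 := by simp [dy]
@[simp] lemma dx_one : dx 1 = 0 := by simp [dx]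
@[simp] lemma dy_one : dy 1 = 0 := by simp [dy]
@[simp] lemma dx_add (p q : P2) : dx (p+q) = dx p + dx q := by simp [dx]
@[simp] lemma dy_add (p q : P2) : dy (p+q) = dy p + dy q := by simp [dy]
@[simp] lemma dx_sub (p q : P2) : dx (p-q) = dx p - dx q := by simp [dx]
@[simp] lemma dy_sub (p q : P2) : dy (p-q) = dy p - dy q := by simp [dy]

def Bn (m n : ℕ) : VF := (px^(n+1) * py^(m-n), px^n * py^(m-n+1))

lemma B_eq (m n : ℕ) (h : n ≤ m) : B (m:ℤ) (n:ℤ) = Bn m n := by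
  have h1 : ((m:ℤ) - n).toNat = m - n := by omega
  have h2 : ((m:ℤ) - n + 1).toNat = m - n + 1 := by omega
  have h3 : ((n:ℤ)+1).toNat = n+1 := by omega
  have h4 : ((n:ℤ)).toNat = n := by omega
  simp [B, Bn, h1, h2, h3, h4]

lemma Bbs_eq (s : ℕ) : Bbs (s:ℤ) = (px * py^s, py^(s+1) - px) := by
  have h1 : ((s:ℤ) - 0).toNat = s := by omega
  have h2 : ((s:ℤ) - 0 + 1).toNat = s + 1 := by omega
  simp [Bbs, A, B, h1, h2, Prod.ext_iff]
  ring

lemma lieBn (s n d : ℕ) (hs : 1 ≤ s) :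
    lie (Bbs (s:ℤ)) (Bn (n+d) n)
      = rsmul ((n:ℝ) + d - s) (Bn (n+d+s) n) - rsmul (d:ℝ) (Bn (n+d) (n+1)) := by
  rw [Bbs_eq]
  obtain ⟨t, rfl⟩ : ∃ t, s = t + 1 := ⟨s-1, by omega⟩
  have e1 : Bn (n+d) n = (px^(n+1)*py^d, px^n*py^(d+1)) := by
    simp [Bn, Prod.ext_iff]
  have e2 : Bn (n+d+(t+1)) n = (px^(n+1)*py^(d+(t+1)), px^n*py^(d+(t+1)+1)) := by
    simp [Bn, Prod.ext_iff]
    constructor <;> { left ; congr 1 ; omega }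
  rw [e1, e2]
  cases d with
  | zero =>
    have e3 : Bn (n+0) (n+1) = (px^(n+1+1)*py^(n+0-(n+1)), px^(n+1)*py^(n+0-(n+1)+1)) := rfl
    rw [e3]
    cases n with
    | zero =>
      simp [lie, rsmul, Prod.ext_iff, map_sub, map_add]
      constructor <;> push_cast <;> ring
    | succ m =>
      simp [lie, rsmul, Prod.ext_iff, map_sub, map_add]
      constructor <;> push_cast <;> ring
  | succ e =>
    have e3 : Bn (n+(e+1)) (n+1) = (px^(n+1+1)*py^e, px^(n+1)*py^(e+1)) := by
      simp [Bn, Prod.ext_iff]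
      constructor <;> { left ; congr 1 ; omega }
    rw [e3]
    cases n with
    | zero =>
      simp [lie, rsmul, Prod.ext_iff, map_sub, map_add]
      constructor <;> push_cast <;> ring
    | succ m =>
      simp [lie, rsmul, Prod.ext_iff, map_sub, map_add]
      constructor <;> push_cast <;> ring

lemma lie_add (v w w' : VF) : lie v (w + w') = lie v w + lie v w' := by
  simp [lie, Prod.ext_iff] ; constructor <;> ring

lemma lie_rsmul (v : VF) (c : ℝ) (w : VF) : lie v (rsmul c w) = rsmul c (lie v w) := by
  simp [lie, rsmul, Prod.ext_iff] ; constructor <;> ring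

lemma lie_sum {ι : Type} (v : VF) (t : Finset ι) (f : ι → VF) :
    lie v (∑ i ∈ t, f i) = ∑ i ∈ t, lie v (f i) := by
  classical
  induction t using Finset.induction with
  | empty => simp [lie, Prod.ext_iff, dx, dy]
  | insert a t' h ih => rw [Finset.sum_insert h, Finset.sum_insert h, lie_add, ih]

@[simp] lemma rsmul_zero_coeff (v : VF) : rsmul 0 v = 0 := by simp [rsmul, Prod.ext_iff]
lemma rsmul_rsmul (c c' : ℝ) (v : VF) : rsmul c (rsmul c' v) = rsmul (c*c') v := by
  simp [rsmul, Prod.ext_iff] ; constructor <;> ring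
lemma rsmul_sub (c : ℝ) (v w : VF) : rsmul c (v - w) = rsmul c v - rsmul c w := by
  simp [rsmul, Prod.ext_iff, mul_sub]

lemma rsmul_congr {c c' : ℝ} {v v' : VF} (h : c = c') (h' : v = v') :
    rsmul c v = rsmul c' v' := by rw [h, h']

lemma Bn_congr {m m' n n' : ℕ} (h : m = m') (h' : n = n') : Bn m n = Bn m' n' := by rw [h, h']

lemma B_eq' (k l s : ℕ) (hl : l ≤ k) :
    B ((k:ℤ) + l * s) ((k:ℤ) - l) = Bn (k + l*s) (k - l) := by
  have h1 : ((k:ℤ) + l * s) = ((k + l*s : ℕ) : ℤ) := by push_cast ; ring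
  have h2 : ((k:ℤ) - l) = ((k - l : ℕ) : ℤ) := by omega
  rw [h1, h2, B_eq] ; omega

def Fv (s k l : ℕ) : VF :=
  rsmul (poch ((k:ℝ)-s) s (l+1) / ((Nat.factorial l : ℝ) * ((s:ℝ)+1)^l)) (Bn (k + l*s + s) (k-l))

def Gv (s k l : ℕ) : VF :=
  rsmul (poch ((k:ℝ)-s) s l / ((Nat.factorial l : ℝ) * ((s:ℝ)+1)^l) * ((l:ℝ)*((s:ℝ)+1)))
    (Bn (k + l*s) (k-l+1))

lemma key (s k l : ℕ) (hs : 1 ≤ s) (hl : l ≤ k) :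
    lie (Bbs (s:ℤ))
        (rsmul (poch ((k:ℝ)-s) s l / ((Nat.factorial l : ℝ) * ((s:ℝ)+1)^l))
          (B ((k:ℤ) + l*s) ((k:ℤ) - l)))
      = Fv s k l - Gv s k l := by
  obtain ⟨b, rfl⟩ : ∃ b, k = l + b := ⟨k - l, by omega⟩
  rw [lie_rsmul, B_eq' _ _ _ hl]
  have e2 : l + b - l = b := by omega
  have e1 : l + b + l * s = b + l * (s+1) := by ring
  rw [e2, e1, lieBn s b (l*(s+1)) hs, rsmul_sub, rsmul_rsmul, rsmul_rsmul, Fv, Gv, e2]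
  congr 1
  · refine rsmul_congr ?_ (Bn_congr (by ring) rfl)
    rw [poch, poch, Finset.prod_range_succ, ← poch]
    push_cast ; ring
  · exact rsmul_congr (by push_cast ; ring) (Bn_congr (by ring) rfl)

lemma hshift (s k l : ℕ) (hs : 1 ≤ s) (hl : l < k) : Gv s k (l+1) = Fv s k l := by
  rw [Fv, Gv]
  refine rsmul_congr ?_ (Bn_congr (by ring) (by omega))
  rw [Nat.factorial_succ]
  have h1 : ((s:ℝ)+1) ≠ 0 := by positivity
  have h2 : (Nat.factorial l : ℝ) ≠ 0 := Nat.cast_ne_zero.mpr (Nat.factorial_ne_zero l)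
  field_simp
  push_cast
  ring

theorem main (s k : ℕ) (hs : 1 ≤ s) (hk : 1 ≤ k) :
    lie (Bbs (s : ℤ)) (calB s k) =
        rsmul (poch ((k : ℝ) - s) (s : ℝ) (k + 1) / ((Nat.factorial k : ℝ) * ((s : ℝ) + 1) ^ k))
          (B ((k : ℤ) * (s + 1) + s) 0) := by
  have hcalB : lie (Bbs (s:ℤ)) (calB s k)
      = ∑ l ∈ Finset.range (k+1), (Fv s k l - Gv s k l) := by
    rw [calB, lie_sum]
    exact Finset.sum_congr rfl
      (fun l hl => key s k l hs (Nat.lt_succ_iff.mp (Finset.mem_range.mp hl)))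
  have hG0 : Gv s k 0 = 0 := by rw [Gv] ; simp
  have hsum : ∑ l ∈ Finset.range (k+1), (Fv s k l - Gv s k l) = Fv s k k := by
    rw [Finset.sum_sub_distrib, Finset.sum_range_succ (f := fun l => Fv s k l),
      Finset.sum_range_succ' (f := fun l => Gv s k l), hG0,
      Finset.sum_congr rfl (fun l hl => hshift s k l hs (Finset.mem_range.mp hl))]
    abel
  rw [hcalB, hsum, Fv]
  have e2 : B ((k:ℤ)*(s+1) + s) 0 = Bn (k*(s+1)+s) 0 := by
    have h1 : (k:ℤ)*(s+1)+s = ((k*(s+1)+s : ℕ) : ℤ) := by push_cast ; ring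
    have h2 : (0:ℤ) = ((0:ℕ):ℤ) := rfl
    rw [h1, h2, B_eq] ; omega
  rw [e2]
  exact rsmul_congr rfl (Bn_congr (by ring) (by omega))


/-- [𝔹_s, ℬ_k^k] = ((k-s)_s^{k+1} / (k!(s+1)^k)) B_{k(s+1)+s}^0; in particular
ℬ_s^s commutes with 𝔹_s. -/
theorem lie_Bbs_calB (s k : ℕ) (hs : 1 ≤ s) (hk : 1 ≤ k) :
    lie (Bbs (s : ℤ)) (calB s k) =
        rsmul (poch ((k : ℝ) - s) (s : ℝ) (k + 1) / ((Nat.factorial k : ℝ) * ((s : ℝ) + 1) ^ k))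
          (B ((k : ℤ) * (s + 1) + s) 0) ∧
      lie (Bbs (s : ℤ)) (calB s s) = 0 := by
  refine ⟨main s k hs hk, ?_⟩
  rw [main s s hs hs]
  have h0 : poch ((s:ℝ) - s) (s:ℝ) (s+1) = 0 := by
    rw [poch]
    apply Finset.prod_eq_zero (Finset.mem_range.mpr (Nat.succ_pos s))
    simp
  rw [h0]
  simp

end BT
end
end

section
/- For any r ≥ 1 and s ≥ 1, the bracket of A_r^{-1} with the symmetry field ℬ_s^s satisfies [A_r^{-1}, ℬ_s^s] = −r A_{s+r}^{s-1} + (s(s+2)/(s+r+2)) B_{s+r}^{s-1} + (higher-index terms), and in particular the leading (l = 0) term computation gives [A_r^{-1}, B_s^s] = −r A_{s+r}^{s-1} + (s(s+2)/(s+r+2)) B_{s+r}^{s-1}. -/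
noncomputable section
namespace BT

open MvPolynomial Finset

/-- [A_r^{-1}, B_s^s] = -r A_{s+r}^{s-1} + (s(s+2)/(s+r+2)) B_{s+r}^{s-1}. -/
theorem lie_Ar_Bss (r s : ℕ) (hr : 1 ≤ r) (hs : 1 ≤ s) :
    lie (A (r : ℤ) (-1)) (B (s : ℤ) (s : ℤ)) =
      rsmul (-(r : ℝ)) (A ((s : ℤ) + r) ((s : ℤ) - 1)) +
        rsmul ((s : ℝ) * ((s : ℝ) + 2) / ((s : ℝ) + r + 2)) (B ((s : ℤ) + r) ((s : ℤ) - 1)) := by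
  obtain ⟨t, rfl⟩ : ∃ t, s = t + 1 := ⟨s-1, by omega⟩
  unfold lie A B rsmul dx dy px py
  push_cast
  norm_num
  rw [show ((t:ℤ) + 1 + 1).toNat = t + 2 by omega,
      show ((t:ℤ) + 1 + (r:ℤ)).toNat - t = r + 1 by omega,
      show ((t:ℤ) + 1 + (r:ℤ) - (t:ℤ) + 1).toNat = r + 2 by omega]
  have hq : (t:ℝ) + 1 + (r:ℝ) + 2 ≠ 0 := by positivity
  have hr2 : (r:ℝ) + 2 ≠ 0 := by positivity
  constructor <;>
  · apply MvPolynomial.funext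
    intro x
    simp
    field_simp
    ring

end BT
end
end
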